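/- Fix real matrices A (n×n) and B (n×m). For a symmetric positive semidefinite n×n matrix Q and a symmetric positive definite m×m matrix R, let P_T(Q,R) be defined by the Riccati iteration P_0(Q,R) = 0 and P_{k+1}(Q,R) = AᵀP_k(Q,R)A − AᵀP_k(Q,R)B(BᵀP_k(Q,R)B+R)⁻¹BᵀP_k(Q,R)A + Q. Let δ ∈ [0,1) and let Q, Q′ be symmetric positive semidefinite n×n matrices and R, R′ symmetric positive definite m×m matrices with Q′ ⪯ (1+δ)Q and R′ ⪯ (1+δ)R. Then for every T ∈ ℕ, (1−δ)·P_T(Q′,R′) ⪯ P_T(Q,R). -/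

import Mathlib

open Matrix

/-- The finite-horizon Riccati iteration with `P 0 = 0` and
`P (k+1) = AᵀP_kA − AᵀP_kB(BᵀP_kB+R)⁻¹BᵀP_kA + Q`. -/
noncomputable def riccati {n m : ℕ} (A : Matrix (Fin n) (Fin n) ℝ)
    (B : Matrix (Fin n) (Fin m) ℝ) (Q : Matrix (Fin n) (Fin n) ℝ)
    (R : Matrix (Fin m) (Fin m) ℝ) : ℕ → Matrix (Fin n) (Fin n) ℝ
  | 0 => 0
  | k + 1 =>
      Aᵀ * riccati A B Q R k * A -
        Aᵀ * riccati A B Q R k * B * (Bᵀ * riccati A B Q R k * B + R)⁻¹ *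
          Bᵀ * riccati A B Q R k * A + Q

/-- The Loewner order on real square matrices: `X ⪯ Y` iff `Y − X` is positive semidefinite. -/
def loewnerLE {n : ℕ} (X Y : Matrix (Fin n) (Fin n) ℝ) : Prop := (Y - X).PosSemidef

/-! The Riccati step `AᵀPA − AᵀPB(BᵀPB+R)⁻¹BᵀPA + Q` is, by completing the square, the minimum
over feedback gains `G` of the cost `(A − BG)ᵀP(A − BG) + GᵀRG + Q`, and that cost is monotone in
`(P, Q, R)` for each fixed `G`. Hence `P_T(Q, R)` is monotone in `(Q, R)`. It is also homogeneous,
`P_T(cQ, cR) = c P_T(Q, R)`, so `P_T(Q', R') ⪯ P_T((1+δ)Q, (1+δ)R) = (1+δ) P_T(Q, R)`, and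
`(1−δ)(1+δ) = 1 − δ² ≤ 1` together with `P_T(Q, R) ⪰ 0` gives the claim. -/

-- In this order `X ≤ Y` unfolds to `loewnerLE X Y`.
open scoped MatrixOrder

namespace Matrix

-- Since `S⁻¹ = 0` for singular `S`, both sides vanish when `c = 0` or `S` is singular.
theorem inv_smul₀ {K n : Type*} [Field K] [Fintype n] [DecidableEq n] (c : K)
    (S : Matrix n n K) : (c • S)⁻¹ = c⁻¹ • S⁻¹ := by
  rcases eq_or_ne c 0 with rfl | hc
  · simp
  by_cases hS : IsUnit S.det
  · exact inv_smul' S (Units.mk0 c hc) hS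
  · have hcS : ¬IsUnit (c • S).det := by
      simpa [det_smul, hc] using hS
    rw [nonsing_inv_apply_not_isUnit _ hS, nonsing_inv_apply_not_isUnit _ hcS, smul_zero]

variable {k n : Type*} [Fintype k] [Fintype n] {X Y : Matrix n n ℝ}

theorem PosSemidef.transpose_mul_mul_same (hX : X.PosSemidef) (M : Matrix n k ℝ) :
    (Mᵀ * X * M).PosSemidef := by
  simpa [conjTranspose_eq_transpose_of_trivial] using hX.conjTranspose_mul_mul_same M

theorem transpose_mul_mul_le_transpose_mul_mul (h : X ≤ Y) (M : Matrix n k ℝ) :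
    Mᵀ * X * M ≤ Mᵀ * Y * M := by
  rw [le_iff, ← Matrix.sub_mul, ← Matrix.mul_sub]
  exact PosSemidef.transpose_mul_mul_same h M

theorem PosDef.transpose_mul_mul_same_add {R : Matrix k k ℝ} (hR : R.PosDef) (hX : 0 ≤ X)
    (M : Matrix n k ℝ) : (Mᵀ * X * M + R).PosDef :=
  hR.posSemidef_add (hX.posSemidef.transpose_mul_mul_same M)

end Matrix

section RiccatiStep

variable {K : Type*} [Field K] {m n : Type*} [Fintype m] [Fintype n]
  (A : Matrix n n K) (B : Matrix n m K) (Q : Matrix n n K) (R : Matrix m m K)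

def riccatiCost (P : Matrix n n K) (G : Matrix m n K) : Matrix n n K :=
  (A - B * G)ᵀ * P * (A - B * G) + Gᵀ * R * G + Q

variable [DecidableEq m]

noncomputable def riccatiStep (P : Matrix n n K) : Matrix n n K :=
  Aᵀ * P * A - Aᵀ * P * B * (Bᵀ * P * B + R)⁻¹ * Bᵀ * P * A + Q

noncomputable def riccatiGain (P : Matrix n n K) : Matrix m n K :=
  (Bᵀ * P * B + R)⁻¹ * (Bᵀ * P * A)

variable {A B Q R} {P : Matrix n n K}

theorem riccatiCost_sub_riccatiStep (hP : Pᵀ = P) (hR : Rᵀ = R)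
    (hS : IsUnit (Bᵀ * P * B + R).det) (G : Matrix m n K) :
    riccatiCost A B Q R P G - riccatiStep A B Q R P =
      (G - riccatiGain A B R P)ᵀ * (Bᵀ * P * B + R) * (G - riccatiGain A B R P) := by
  unfold riccatiCost riccatiStep riccatiGain
  generalize hSdef : Bᵀ * P * B + R = S at hS ⊢
  have hSt : Sᵀ = S := by rw [← hSdef]; simp [Matrix.mul_assoc, hP, hR]
  have hSi : (S⁻¹)ᵀ = S⁻¹ := by rw [transpose_nonsing_inv, hSt]
  have hSS (X : Matrix m n K) : S * (S⁻¹ * X) = X := mul_nonsing_inv_cancel_left S X hS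
  have hSS' (X : Matrix m n K) : S⁻¹ * (S * X) = X := nonsing_inv_mul_cancel_left S X hS
  have hBPB (X : Matrix m n K) : Bᵀ * (P * (B * X)) = S * X - R * X := by
    simp only [← hSdef, Matrix.add_mul, Matrix.mul_assoc, add_sub_cancel_right]
  -- After expanding, `BᵀPB = S − R` and `S S⁻¹ = 1` leave an identity of abelian groups.
  simp only [transpose_sub, transpose_mul, transpose_transpose, hP, hSi,
    Matrix.sub_mul, Matrix.mul_sub, Matrix.mul_assoc, hSS, hSS', hBPB]
  abel

theorem riccatiStep_smul (c : K) :
    riccatiStep A B (c • Q) (c • R) (c • P) = c • riccatiStep A B Q R P := by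
  have hS : Bᵀ * (c • P) * B + c • R = c • (Bᵀ * P * B + R) := by
    rw [Matrix.mul_smul, Matrix.smul_mul, smul_add]
  unfold riccatiStep
  rw [hS, inv_smul₀]
  simp only [Matrix.mul_smul, Matrix.smul_mul, smul_smul, smul_sub, smul_add]
  rw [← mul_assoc, mul_inv_mul_cancel]

end RiccatiStep

section RiccatiStepOrder

variable {m n : Type*} [Fintype m] [Fintype n]
  {A : Matrix n n ℝ} {B : Matrix n m ℝ} {Q Q' P P' : Matrix n n ℝ} {R R' : Matrix m m ℝ}

theorem riccatiCost_mono (hP : P ≤ P') (hQ : Q ≤ Q') (hR : R ≤ R') (G : Matrix m n ℝ) :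
    riccatiCost A B Q R P G ≤ riccatiCost A B Q' R' P' G := by
  unfold riccatiCost
  gcongr
  · exact transpose_mul_mul_le_transpose_mul_mul hP _
  · exact transpose_mul_mul_le_transpose_mul_mul hR _

theorem riccatiCost_nonneg (hP : 0 ≤ P) (hQ : 0 ≤ Q) (hR : 0 ≤ R) (G : Matrix m n ℝ) :
    0 ≤ riccatiCost A B Q R P G := by
  simpa [riccatiCost] using riccatiCost_mono (A := A) (B := B) hP hQ hR G

variable [DecidableEq m]

theorem riccatiCost_sub_riccatiStep_of_nonneg (hP : 0 ≤ P) (hR : R.PosDef) (G : Matrix m n ℝ) :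
    riccatiCost A B Q R P G - riccatiStep A B Q R P =
      (G - riccatiGain A B R P)ᵀ * (Bᵀ * P * B + R) * (G - riccatiGain A B R P) :=
  riccatiCost_sub_riccatiStep hP.posSemidef.isHermitian.eq hR.isHermitian.eq
    (hR.transpose_mul_mul_same_add hP B).det_pos.ne'.isUnit G

theorem riccatiStep_le_riccatiCost (hP : 0 ≤ P) (hR : R.PosDef) (G : Matrix m n ℝ) :
    riccatiStep A B Q R P ≤ riccatiCost A B Q R P G := by
  rw [le_iff, riccatiCost_sub_riccatiStep_of_nonneg hP hR]
  exact (hR.transpose_mul_mul_same_add hP B).posSemidef.transpose_mul_mul_same _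

theorem riccatiStep_eq_riccatiCost_riccatiGain (hP : 0 ≤ P) (hR : R.PosDef) :
    riccatiStep A B Q R P = riccatiCost A B Q R P (riccatiGain A B R P) := by
  have h := riccatiCost_sub_riccatiStep_of_nonneg (A := A) (B := B) (Q := Q) hP hR
    (riccatiGain A B R P)
  rw [sub_self, Matrix.mul_zero] at h
  exact (sub_eq_zero.mp h).symm

theorem riccatiStep_nonneg (hP : 0 ≤ P) (hQ : 0 ≤ Q) (hR : R.PosDef) :
    0 ≤ riccatiStep A B Q R P := by
  rw [riccatiStep_eq_riccatiCost_riccatiGain hP hR]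
  exact riccatiCost_nonneg hP hQ hR.posSemidef.nonneg _

theorem riccatiStep_mono (hP : 0 ≤ P) (hR : R.PosDef) (hPP : P ≤ P') (hQQ : Q ≤ Q')
    (hRR : R ≤ R') : riccatiStep A B Q R P ≤ riccatiStep A B Q' R' P' := by
  have hP' : 0 ≤ P' := hP.trans hPP
  have hR' : R'.PosDef := by simpa using hR.add_posSemidef (le_iff.mp hRR)
  calc riccatiStep A B Q R P ≤ riccatiCost A B Q R P (riccatiGain A B R' P') :=
        riccatiStep_le_riccatiCost hP hR _
    _ ≤ riccatiCost A B Q' R' P' (riccatiGain A B R' P') := riccatiCost_mono hPP hQQ hRR _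
    _ = riccatiStep A B Q' R' P' := (riccatiStep_eq_riccatiCost_riccatiGain hP' hR').symm

end RiccatiStepOrder

section Riccati

variable {n m : ℕ} {A : Matrix (Fin n) (Fin n) ℝ} {B : Matrix (Fin n) (Fin m) ℝ}
  {Q Q' : Matrix (Fin n) (Fin n) ℝ} {R R' : Matrix (Fin m) (Fin m) ℝ}

theorem riccati_succ (T : ℕ) :
    riccati A B Q R (T + 1) = riccatiStep A B Q R (riccati A B Q R T) := rfl

theorem riccati_nonneg (hQ : 0 ≤ Q) (hR : R.PosDef) (T : ℕ) : 0 ≤ riccati A B Q R T := by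
  induction T with
  | zero => exact le_rfl
  | succ T ih => exact riccatiStep_nonneg ih hQ hR

theorem riccati_smul (c : ℝ) (T : ℕ) :
    riccati A B (c • Q) (c • R) T = c • riccati A B Q R T := by
  induction T with
  | zero => exact (smul_zero c).symm
  | succ T ih => rw [riccati_succ, riccati_succ, ih, riccatiStep_smul]

theorem riccati_mono (hQ : 0 ≤ Q) (hR : R.PosDef) (hQQ : Q ≤ Q') (hRR : R ≤ R') (T : ℕ) :
    riccati A B Q R T ≤ riccati A B Q' R' T := by
  induction T with
  | zero => exact le_rfl
  | succ T ih => exact riccatiStep_mono (riccati_nonneg hQ hR T) hR ih hQQ hRR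

end Riccati

theorem riccati_perturbation_bound_general {n m : ℕ}
    (A : Matrix (Fin n) (Fin n) ℝ) (B : Matrix (Fin n) (Fin m) ℝ)
    (δ : ℝ) (hδ1 : δ < 1)
    (Q Q' : Matrix (Fin n) (Fin n) ℝ) (R R' : Matrix (Fin m) (Fin m) ℝ)
    (hQ : Q.PosSemidef) (hQ' : Q'.PosSemidef) (hR : R.PosDef) (hR' : R'.PosDef)
    (hQle : loewnerLE Q' ((1 + δ) • Q)) (hRle : loewnerLE R' ((1 + δ) • R)) :
    ∀ T : ℕ, loewnerLE ((1 - δ) • riccati A B Q' R' T) (riccati A B Q R T) := by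
  intro T
  have hle : riccati A B Q' R' T ≤ (1 + δ) • riccati A B Q R T := by
    rw [← riccati_smul]
    exact riccati_mono hQ'.nonneg hR' hQle hRle T
  calc (1 - δ) • riccati A B Q' R' T ≤ (1 - δ) • (1 + δ) • riccati A B Q R T :=
        smul_le_smul_of_nonneg_left hle (by linarith)
    _ = (1 - δ ^ 2) • riccati A B Q R T := by rw [smul_smul]; ring_nf
    _ ≤ riccati A B Q R T :=
        smul_le_of_le_one_left (riccati_nonneg hQ.nonneg hR T) (by nlinarith)

/-- Quantitative perturbation bound for the Riccati recursion: if `Q′ ⪯ (1+δ)Q` and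
`R′ ⪯ (1+δ)R` with `δ ∈ [0,1)`, then `(1−δ)·P_T(Q′,R′) ⪯ P_T(Q,R)` for every `T`. -/
theorem riccati_perturbation_bound {n m : ℕ}
    (A : Matrix (Fin n) (Fin n) ℝ) (B : Matrix (Fin n) (Fin m) ℝ)
    (δ : ℝ) (hδ0 : 0 ≤ δ) (hδ1 : δ < 1)
    (Q Q' : Matrix (Fin n) (Fin n) ℝ) (R R' : Matrix (Fin m) (Fin m) ℝ)
    (hQ : Q.PosSemidef) (hQ' : Q'.PosSemidef) (hR : R.PosDef) (hR' : R'.PosDef)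
    (hQle : loewnerLE Q' ((1 + δ) • Q)) (hRle : loewnerLE R' ((1 + δ) • R)) :
    ∀ T : ℕ, loewnerLE ((1 - δ) • riccati A B Q' R' T) (riccati A B Q R T) :=
  riccati_perturbation_bound_general A B δ hδ1 Q Q' R R' hQ hQ' hR hR' hQle hRle
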